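/- arXiv:1707.02209 — 8 statements merged into one kernel-verified Lean document; each statement's English description precedes it below -/
import Mathlib

section
/- Let v ∈ C¹(ℝ₊ × [0,1]) be such that there exists a constant v_min > 0 with v(t,x) ≥ v_min for all t ≥ 0, x ∈ [0,1], and such that v has Lipschitz derivatives on [0,T] × [0,1] for every T > 0. Let w ∈ C¹(ℝ₊ × [0,1]) satisfy ∂w/∂t(t,x) + v(t,x)·∂w/∂x(t,x) = 0 for all t ≥ 0, x ∈ [0,1], and w(t,0) = 0 for all t ≥ 0. Then w(t,x) = 0 for all x ∈ [0,1] and all t ≥ v_min⁻¹. -/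
/-!
For `σ > 0` the weighted energy `V_σ(t) = ∫₀¹ e^{-σx} w(t,x)² dx` satisfies
`V_σ' ≤ (C - σ v_min) V_σ`, where `C` bounds `∂v/∂x`: integrating the transport term by parts,
the inflow boundary contributes nothing and the outflow boundary has the favourable sign.
Grönwall over a time interval of length `d` gives `V_σ(t) ≤ B² e^{Cd} e^{-σ v_min d}`, with `B`
a bound for `|w|`, while `V_σ(t) ≥ e^{-σ} ‖w(t)‖²`. If `v_min d > 1`, letting `σ → ∞` forces
`‖w(t)‖ = 0`; this covers every `t > v_min⁻¹`, and `t = v_min⁻¹` follows by continuity.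
-/

open Set MeasureTheory Filter Topology Real
open scoped Interval

noncomputable def weightedEnergy (σ : ℝ) (u : ℝ → ℝ) : ℝ :=
  ∫ x in (0:ℝ)..1, exp (-σ * x) * u x ^ 2

lemma exp_neg_mul_le_one {σ x : ℝ} (hσ : 0 ≤ σ) (hx : 0 ≤ x) : exp (-σ * x) ≤ 1 :=
  exp_le_one_iff.2 (mul_nonpos_of_nonpos_of_nonneg (neg_nonpos.2 hσ) hx)

lemma intervalIntegrable_exp_neg_mul_mul {σ : ℝ} {f : ℝ → ℝ} (hf : ContinuousOn f (Icc 0 1)) :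
    IntervalIntegrable (fun x => exp (-σ * x) * f x) volume 0 1 :=
  ((continuous_const.mul continuous_id).rexp.continuousOn.mul hf).intervalIntegrable_of_Icc
    zero_le_one

lemma weightedEnergy_le_sq {σ B : ℝ} {u : ℝ → ℝ} (hσ : 0 ≤ σ) (hu : ContinuousOn u (Icc 0 1))
    (hB : ∀ x ∈ Icc (0:ℝ) 1, |u x| ≤ B) : weightedEnergy σ u ≤ B ^ 2 := by
  have hle : ∀ x ∈ Icc (0:ℝ) 1, exp (-σ * x) * u x ^ 2 ≤ B ^ 2 := fun x hx =>
    calc exp (-σ * x) * u x ^ 2 ≤ 1 * B ^ 2 :=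
          mul_le_mul (exp_neg_mul_le_one hσ hx.1)
            (by simpa only [sq_abs] using pow_le_pow_left₀ (abs_nonneg _) (hB x hx) 2)
            (sq_nonneg _) zero_le_one
      _ = B ^ 2 := one_mul _
  simpa [weightedEnergy] using intervalIntegral.integral_mono_on zero_le_one
    (intervalIntegrable_exp_neg_mul_mul (hu.pow 2)) intervalIntegrable_const hle

lemma exp_neg_mul_integral_sq_le_weightedEnergy {σ : ℝ} {u : ℝ → ℝ} (hσ : 0 ≤ σ)
    (hu : ContinuousOn u (Icc 0 1)) :
    exp (-σ) * ∫ x in (0:ℝ)..1, u x ^ 2 ≤ weightedEnergy σ u := by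
  rw [← intervalIntegral.integral_const_mul]
  refine intervalIntegral.integral_mono_on zero_le_one
    (((hu.pow 2).intervalIntegrable_of_Icc zero_le_one).const_mul _)
    (intervalIntegrable_exp_neg_mul_mul (hu.pow 2)) fun x hx => ?_
  gcongr
  nlinarith [hx.2]

lemma eqOn_zero_of_integral_sq_eq_zero {u : ℝ → ℝ} (hu : ContinuousOn u (Icc 0 1))
    (h : ∫ x in (0:ℝ)..1, u x ^ 2 = 0) : EqOn u 0 (Icc 0 1) := by
  have hsq : (fun x => u x ^ 2) =ᵐ[volume.restrict (Icc 0 1)] 0 := by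
    rw [Measure.restrict_congr_set Ioc_ae_eq_Icc.symm]
    exact (intervalIntegral.integral_eq_zero_iff_of_le_of_nonneg_ae zero_le_one
      (Eventually.of_forall fun x => sq_nonneg (u x))
      ((hu.pow 2).intervalIntegrable_of_Icc zero_le_one)).1 h
  intro x hx
  simpa using Measure.eqOn_Icc_of_ae_eq volume zero_ne_one hsq (hu.pow 2) continuousOn_const hx

lemma nonpos_of_forall_le_mul_exp {I A c : ℝ} (hc : c < 0) (h : ∀ σ > 0, I ≤ A * exp (c * σ)) :
    I ≤ 0 := by
  have hlim : Tendsto (fun σ => A * exp (c * σ)) atTop (𝓝 0) := by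
    simpa using (tendsto_exp_atBot.comp (tendsto_id.const_mul_atTop_of_neg hc)).const_mul A
  exact ge_of_tendsto hlim ((eventually_gt_atTop 0).mono h)

lemma eqOn_zero_of_weightedEnergy_le {A c : ℝ} {u : ℝ → ℝ} (hu : ContinuousOn u (Icc 0 1))
    (hc : 1 < c) (h : ∀ σ > 0, weightedEnergy σ u ≤ A * exp (-(c * σ))) :
    EqOn u 0 (Icc 0 1) := by
  refine eqOn_zero_of_integral_sq_eq_zero hu (le_antisymm ?_
    (intervalIntegral.integral_nonneg zero_le_one fun x _ => sq_nonneg (u x)))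
  refine nonpos_of_forall_le_mul_exp (c := 1 - c) (A := A) (by linarith) fun σ hσ => ?_
  have := (exp_neg_mul_integral_sq_le_weightedEnergy hσ.le hu).trans (h σ hσ)
  rw [← le_div_iff₀' (exp_pos _), mul_div_assoc, ← exp_sub] at this
  rwa [show (1 - c) * σ = -(c * σ) - -σ by ring]

lemma le_mul_exp_of_hasDerivAt_le_mul {f f' : ℝ → ℝ} {K a b : ℝ} (hab : a ≤ b)
    (hf : ∀ t ∈ Icc a b, HasDerivAt f (f' t) t) (hbound : ∀ t ∈ Icc a b, f' t ≤ K * f t) :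
    f b ≤ f a * exp (K * (b - a)) := by
  have := le_gronwallBound_of_liminf_deriv_right_le (ε := 0)
    (fun t ht => (hf t ht).continuousAt.continuousWithinAt)
    (fun t ht r hr => (hf t (Ico_subset_Icc_self ht)).hasDerivWithinAt.liminf_right_slope_le hr)
    le_rfl (fun t ht => by simpa using hbound t (Ico_subset_Icc_self ht)) b (right_mem_Icc.2 hab)
  rwa [gronwallBound_ε0] at this

lemma hasDerivAt_weightedEnergy {σ t Bw Bwt : ℝ} {w wt : ℝ → ℝ → ℝ} (hσ : 0 ≤ σ)
    (hw : ∀ᶠ s in 𝓝 t, ContinuousOn (w s) (Icc 0 1)) (hwt : ContinuousOn (wt t) (Icc 0 1))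
    (hderiv : ∀ᶠ s in 𝓝 t, ∀ x ∈ Icc (0:ℝ) 1, HasDerivAt (fun s => w s x) (wt s x) s)
    (hbound : ∀ᶠ s in 𝓝 t, ∀ x ∈ Icc (0:ℝ) 1, |w s x| ≤ Bw ∧ |wt s x| ≤ Bwt) :
    HasDerivAt (fun s => weightedEnergy σ (w s))
      (∫ x in (0:ℝ)..1, exp (-σ * x) * (2 * w t x * wt t x)) t := by
  have hmeas : ∀ {f : ℝ → ℝ}, ContinuousOn f (Icc 0 1) →
      AEStronglyMeasurable (fun x => exp (-σ * x) * f x) (volume.restrict (Ι 0 1)) :=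
    fun hf => (intervalIntegrable_exp_neg_mul_mul hf).def'.aestronglyMeasurable
  have hIcc : ∀ {x : ℝ}, x ∈ Ι 0 1 → x ∈ Icc (0:ℝ) 1 := fun hx =>
    Ioc_subset_Icc_self (by rwa [uIoc_of_le zero_le_one] at hx)
  refine (intervalIntegral.hasDerivAt_integral_of_dominated_loc_of_deriv_le
    (F' := fun s x => exp (-σ * x) * (2 * w s x * wt s x)) (bound := fun _ => 2 * Bw * Bwt)
    (hderiv.and hbound) (hw.mono fun s hs => hmeas (hs.pow 2))
    (intervalIntegrable_exp_neg_mul_mul (hw.self_of_nhds.pow 2))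
    (hmeas ((continuousOn_const.mul hw.self_of_nhds).mul hwt)) ?_ intervalIntegrable_const ?_).2
  · refine Eventually.of_forall fun x hx s hs => ?_
    obtain ⟨hws, hwts⟩ := hs.2 x (hIcc hx)
    rw [norm_mul, norm_of_nonneg (exp_pos _).le, norm_mul, norm_mul, Real.norm_two,
      Real.norm_eq_abs, Real.norm_eq_abs]
    calc exp (-σ * x) * (2 * |w s x| * |wt s x|) ≤ 1 * (2 * Bw * Bwt) :=
          mul_le_mul (exp_neg_mul_le_one hσ (hIcc hx).1)
            (mul_le_mul (mul_le_mul_of_nonneg_left hws zero_le_two) hwts (abs_nonneg _)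
              (mul_nonneg zero_le_two ((abs_nonneg _).trans hws)))
            (by positivity) zero_le_one
      _ = 2 * Bw * Bwt := one_mul _
  · exact Eventually.of_forall fun x hx s hs =>
      (((hs.1 x (hIcc hx)).pow 2).const_mul (exp (-σ * x))).congr_deriv (by ring)

lemma integral_exp_neg_mul_transport_le {σ vmin C : ℝ} {v v' u ut u' : ℝ → ℝ} (hσ : 0 ≤ σ)
    (hvmin : 0 ≤ vmin) (hv : ∀ x ∈ Icc (0:ℝ) 1, HasDerivWithinAt v (v' x) (Icc 0 1) x)
    (hu : ∀ x ∈ Icc (0:ℝ) 1, HasDerivWithinAt u (u' x) (Icc 0 1) x)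
    (hv' : ContinuousOn v' (Icc 0 1)) (hu' : ContinuousOn u' (Icc 0 1))
    (hpde : ∀ x ∈ Icc (0:ℝ) 1, ut x + v x * u' x = 0) (hu0 : u 0 = 0)
    (hvlb : ∀ x ∈ Icc (0:ℝ) 1, vmin ≤ v x) (hC : ∀ x ∈ Icc (0:ℝ) 1, v' x ≤ C) :
    ∫ x in (0:ℝ)..1, exp (-σ * x) * (2 * u x * ut x) ≤ (C - σ * vmin) * weightedEnergy σ u := by
  have hvc : ContinuousOn v (Icc 0 1) := fun x hx => (hv x hx).continuousWithinAt
  have huc : ContinuousOn u (Icc 0 1) := fun x hx => (hu x hx).continuousWithinAt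
  have hP : ContinuousOn (fun x => (v' x - σ * v x) * u x ^ 2) (Icc 0 1) :=
    (hv'.sub (continuousOn_const.mul hvc)).mul (huc.pow 2)
  have hG' : ContinuousOn (fun x => (v' x - σ * v x) * u x ^ 2 + v x * (2 * u x * u' x))
      (Icc 0 1) :=
    hP.add (hvc.mul ((continuousOn_const.mul huc).mul hu'))
  -- `e^{-σx} v u²` is a primitive of the production term that vanishes at the inflow boundary
  have hflux : ∫ x in (0:ℝ)..1,
      exp (-σ * x) * ((v' x - σ * v x) * u x ^ 2 + v x * (2 * u x * u' x))
        = exp (-σ) * (v 1 * u 1 ^ 2) := by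
    rw [intervalIntegral.integral_eq_sub_of_hasDerivAt_of_le zero_le_one
      (f := fun x => exp (-σ * x) * (v x * u x ^ 2))
      (f' := fun x => exp (-σ * x) * ((v' x - σ * v x) * u x ^ 2 + v x * (2 * u x * u' x)))
      ((continuous_const.mul continuous_id).rexp.continuousOn.mul (hvc.mul (huc.pow 2)))
      (fun x hx => ?_) (intervalIntegrable_exp_neg_mul_mul hG')]
    · simp [hu0]
    · have hnhds := Icc_mem_nhds hx.1 hx.2
      exact ((((hasDerivAt_id' x).const_mul (-σ)).exp).mul
        (((hv x (Ioo_subset_Icc_self hx)).hasDerivAt hnhds).mul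
          (((hu x (Ioo_subset_Icc_self hx)).hasDerivAt hnhds).pow 2))).congr_deriv
          (by simp only [Pi.mul_apply, Pi.pow_apply]; ring)
  have hsplit : ∫ x in (0:ℝ)..1, exp (-σ * x) * (2 * u x * ut x)
      = (∫ x in (0:ℝ)..1, exp (-σ * x) * ((v' x - σ * v x) * u x ^ 2))
        - ∫ x in (0:ℝ)..1,
            exp (-σ * x) * ((v' x - σ * v x) * u x ^ 2 + v x * (2 * u x * u' x)) := by
    rw [← intervalIntegral.integral_sub (intervalIntegrable_exp_neg_mul_mul hP)
      (intervalIntegrable_exp_neg_mul_mul hG')]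
    refine intervalIntegral.integral_congr fun x hx => ?_
    rw [uIcc_of_le zero_le_one] at hx
    simp only [eq_neg_of_add_eq_zero_left (hpde x hx)]
    ring
  have hv1 : 0 ≤ v 1 := hvmin.trans (hvlb 1 (right_mem_Icc.2 zero_le_one))
  calc ∫ x in (0:ℝ)..1, exp (-σ * x) * (2 * u x * ut x)
      ≤ ∫ x in (0:ℝ)..1, exp (-σ * x) * ((v' x - σ * v x) * u x ^ 2) := by
        rw [hsplit, hflux]
        linarith [show 0 ≤ exp (-σ) * (v 1 * u 1 ^ 2) by positivity]
    _ ≤ ∫ x in (0:ℝ)..1, (C - σ * vmin) * (exp (-σ * x) * u x ^ 2) := by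
        refine intervalIntegral.integral_mono_on zero_le_one
          (intervalIntegrable_exp_neg_mul_mul hP)
          ((intervalIntegrable_exp_neg_mul_mul (huc.pow 2)).const_mul _) fun x hx => ?_
        have hrate : v' x - σ * v x ≤ C - σ * vmin := by nlinarith [hC x hx, hvlb x hx]
        calc exp (-σ * x) * ((v' x - σ * v x) * u x ^ 2)
            = (v' x - σ * v x) * (exp (-σ * x) * u x ^ 2) := by ring
          _ ≤ (C - σ * vmin) * (exp (-σ * x) * u x ^ 2) :=
            mul_le_mul_of_nonneg_right hrate (by positivity)
    _ = (C - σ * vmin) * weightedEnergy σ u := intervalIntegral.integral_const_mul _ _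

lemma weightedEnergy_le_mul_exp {σ vmin C Bw Bwt a b T : ℝ} {v vx w wt wx : ℝ → ℝ → ℝ}
    (hσ : 0 ≤ σ) (hvmin : 0 ≤ vmin) (ha : 0 < a) (hab : a ≤ b) (hbT : b < T)
    (hvd : ∀ t ∈ Ici (0:ℝ), ∀ x ∈ Icc (0:ℝ) 1, HasDerivWithinAt (v t) (vx t x) (Icc 0 1) x)
    (hvx : ∀ t ∈ Ici (0:ℝ), ContinuousOn (vx t) (Icc 0 1))
    (hvlb : ∀ t ∈ Ici (0:ℝ), ∀ x ∈ Icc (0:ℝ) 1, vmin ≤ v t x)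
    (hwt : ∀ t ∈ Ici (0:ℝ), ContinuousOn (wt t) (Icc 0 1))
    (hwx : ∀ t ∈ Ici (0:ℝ), ContinuousOn (wx t) (Icc 0 1))
    (hwdt : ∀ t ∈ Ici (0:ℝ), ∀ x ∈ Icc (0:ℝ) 1,
      HasDerivWithinAt (fun s => w s x) (wt t x) (Ici 0) t)
    (hwdx : ∀ t ∈ Ici (0:ℝ), ∀ x ∈ Icc (0:ℝ) 1, HasDerivWithinAt (w t) (wx t x) (Icc 0 1) x)
    (hpde : ∀ t ∈ Ici (0:ℝ), ∀ x ∈ Icc (0:ℝ) 1, wt t x + v t x * wx t x = 0)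
    (hbc : ∀ t ∈ Ici (0:ℝ), w t 0 = 0)
    (hBw : ∀ t ∈ Icc 0 T, ∀ x ∈ Icc (0:ℝ) 1, |w t x| ≤ Bw)
    (hBwt : ∀ t ∈ Icc 0 T, ∀ x ∈ Icc (0:ℝ) 1, |wt t x| ≤ Bwt)
    (hC : ∀ t ∈ Icc 0 T, ∀ x ∈ Icc (0:ℝ) 1, vx t x ≤ C) :
    weightedEnergy σ (w b) ≤ weightedEnergy σ (w a) * exp ((C - σ * vmin) * (b - a)) := by
  refine le_mul_exp_of_hasDerivAt_le_mul hab (f := fun s => weightedEnergy σ (w s))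
    (f' := fun t => ∫ x in (0:ℝ)..1, exp (-σ * x) * (2 * w t x * wt t x))
    (fun t ht => ?_) (fun t ht => ?_)
  · have hnhds : Ioo 0 T ∈ 𝓝 t := Ioo_mem_nhds (ha.trans_le ht.1) (ht.2.trans_lt hbT)
    refine hasDerivAt_weightedEnergy hσ
      (mem_of_superset hnhds fun s hs x hx => (hwdx s hs.1.le x hx).continuousWithinAt)
      (hwt t (ha.le.trans ht.1))
      (mem_of_superset hnhds fun s hs x hx => (hwdt s hs.1.le x hx).hasDerivAt (Ici_mem_nhds hs.1))
      (mem_of_superset hnhds fun s hs x hx =>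
        ⟨hBw s ⟨hs.1.le, hs.2.le⟩ x hx, hBwt s ⟨hs.1.le, hs.2.le⟩ x hx⟩)
  · have ht0 : t ∈ Ici (0:ℝ) := ha.le.trans ht.1
    exact integral_exp_neg_mul_transport_le hσ hvmin (hvd t ht0) (hwdx t ht0) (hvx t ht0)
      (hwx t ht0) (hpde t ht0) (hbc t ht0) (hvlb t ht0) (hC t ⟨ht0, ht.2.trans hbT.le⟩)

lemma exists_forall_abs_le_of_continuousOn {f : ℝ → ℝ → ℝ}
    (hf : ContinuousOn (fun q : ℝ × ℝ => f q.1 q.2) (Ici 0 ×ˢ Icc 0 1)) (T : ℝ) :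
    ∃ B, ∀ t ∈ Icc 0 T, ∀ x ∈ Icc (0:ℝ) 1, |f t x| ≤ B := by
  obtain ⟨B, hB⟩ := (isCompact_Icc.prod isCompact_Icc).exists_bound_of_continuousOn
    (hf.mono (prod_mono Icc_subset_Ici_self subset_rfl))
  exact ⟨B, fun t ht x hx => hB (t, x) ⟨ht, hx⟩⟩

lemma eq_of_continuousWithinAt_Ioi_of_forall_gt {β : Type*} [TopologicalSpace β] [T2Space β]
    {f : ℝ → β} {a : ℝ} {c : β} (hf : ContinuousWithinAt f (Ioi a) a)
    (h : ∀ t > a, f t = c) : f a = c :=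
  tendsto_nhds_unique hf
    (tendsto_const_nhds.congr' (eventually_nhdsWithin_of_forall fun t ht => (h t ht).symm))

theorem stmt4_general (vmin : ℝ) (hvmin : 0 < vmin)
    (v vt vx w wt wx : ℝ → ℝ → ℝ)
    (hvxcont : ContinuousOn (fun q : ℝ × ℝ => vx q.1 q.2) (Ici 0 ×ˢ Icc 0 1))
    (hvd : ∀ t ∈ Ici (0:ℝ), ∀ x ∈ Icc (0:ℝ) 1,
      HasDerivWithinAt (fun s => v s x) (vt t x) (Ici 0) t ∧
      HasDerivWithinAt (fun y => v t y) (vx t x) (Icc 0 1) x)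
    (hvlb : ∀ t ∈ Ici (0:ℝ), ∀ x ∈ Icc (0:ℝ) 1, vmin ≤ v t x)
    (hwcont : ContinuousOn (fun q : ℝ × ℝ => w q.1 q.2) (Ici 0 ×ˢ Icc 0 1))
    (hwtcont : ContinuousOn (fun q : ℝ × ℝ => wt q.1 q.2) (Ici 0 ×ˢ Icc 0 1))
    (hwxcont : ContinuousOn (fun q : ℝ × ℝ => wx q.1 q.2) (Ici 0 ×ˢ Icc 0 1))
    (hwd : ∀ t ∈ Ici (0:ℝ), ∀ x ∈ Icc (0:ℝ) 1,
      HasDerivWithinAt (fun s => w s x) (wt t x) (Ici 0) t ∧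
      HasDerivWithinAt (fun y => w t y) (wx t x) (Icc 0 1) x)
    (hpde : ∀ t ∈ Ici (0:ℝ), ∀ x ∈ Icc (0:ℝ) 1, wt t x + v t x * wx t x = 0)
    (hbc : ∀ t ∈ Ici (0:ℝ), w t 0 = 0) :
    ∀ t : ℝ, vmin⁻¹ ≤ t → ∀ x ∈ Icc (0:ℝ) 1, w t x = 0 := by
  have hslice : ∀ {g : ℝ → ℝ → ℝ},
      ContinuousOn (fun q : ℝ × ℝ => g q.1 q.2) (Ici 0 ×ˢ Icc 0 1) →
      ∀ t ∈ Ici (0:ℝ), ContinuousOn (g t) (Icc 0 1) := fun hg t ht => hg.uncurry_left t ht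
  suffices hgt : ∀ t > vmin⁻¹, EqOn (w t) 0 (Icc 0 1) by
    intro t ht x hx
    have ht0 : 0 < t := (inv_pos.2 hvmin).trans_le ht
    exact eq_of_continuousWithinAt_Ioi_of_forall_gt (f := fun s => w s x)
      ((hwd t ht0.le x hx).1.continuousWithinAt.mono (Ioi_subset_Ici ht0.le))
      fun s hs => hgt s (ht.trans_lt hs) hx
  intro t ht
  obtain ⟨d, hd, hdt⟩ := exists_between ht
  obtain ⟨Bw, hBw⟩ := exists_forall_abs_le_of_continuousOn hwcont (t + 1)
  obtain ⟨Bwt, hBwt⟩ := exists_forall_abs_le_of_continuousOn hwtcont (t + 1)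
  obtain ⟨C, hC⟩ := exists_forall_abs_le_of_continuousOn hvxcont (t + 1)
  have hd0 : 0 < d := (inv_pos.2 hvmin).trans hd
  refine eqOn_zero_of_weightedEnergy_le (hslice hwcont t (hd0.trans hdt).le)
    ((inv_lt_iff_one_lt_mul₀' hvmin).1 hd) (A := Bw ^ 2 * exp (C * d)) fun σ hσ => ?_
  calc weightedEnergy σ (w t)
      ≤ weightedEnergy σ (w (t - d)) * exp ((C - σ * vmin) * (t - (t - d))) :=
        weightedEnergy_le_mul_exp hσ.le hvmin.le (sub_pos.2 hdt) (sub_le_self _ hd0.le)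
          (lt_add_one t) (fun s hs x hx => (hvd s hs x hx).2) (hslice hvxcont) hvlb
          (hslice hwtcont) (hslice hwxcont) (fun s hs x hx => (hwd s hs x hx).1)
          (fun s hs x hx => (hwd s hs x hx).2) hpde hbc hBw hBwt
          (fun s hs x hx => (le_abs_self _).trans (hC s hs x hx))
    _ ≤ Bw ^ 2 * exp ((C - σ * vmin) * (t - (t - d))) := by
        have hs : t - d ∈ Icc 0 (t + 1) := ⟨(sub_pos.2 hdt).le, by linarith⟩
        gcongr
        exact weightedEnergy_le_sq hσ.le (hslice hwcont _ hs.1) (hBw _ hs)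
    _ = Bw ^ 2 * exp (C * d) * exp (-(vmin * d * σ)) := by
        rw [mul_assoc, ← exp_add]
        ring_nf

/-- Finite-time extinction for the transport PDE `∂w/∂t + v ∂w/∂x = 0` on `[0,1]` with
transport velocity bounded below by `v_min > 0` and zero inflow data at `x = 0`:
the solution vanishes identically for all `t ≥ v_min⁻¹`. -/
theorem stmt4 (vmin : ℝ) (hvmin : 0 < vmin)
    (v vt vx w wt wx : ℝ → ℝ → ℝ)
    (hvcont : ContinuousOn (fun q : ℝ × ℝ => v q.1 q.2) (Ici 0 ×ˢ Icc 0 1))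
    (hvtcont : ContinuousOn (fun q : ℝ × ℝ => vt q.1 q.2) (Ici 0 ×ˢ Icc 0 1))
    (hvxcont : ContinuousOn (fun q : ℝ × ℝ => vx q.1 q.2) (Ici 0 ×ˢ Icc 0 1))
    (hvd : ∀ t ∈ Ici (0:ℝ), ∀ x ∈ Icc (0:ℝ) 1,
      HasDerivWithinAt (fun s => v s x) (vt t x) (Ici 0) t ∧
      HasDerivWithinAt (fun y => v t y) (vx t x) (Icc 0 1) x)
    (hvlip : ∀ T > (0:ℝ), ∃ L : NNReal,
      LipschitzOnWith L (fun q : ℝ × ℝ => vt q.1 q.2) (Icc 0 T ×ˢ Icc 0 1) ∧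
      LipschitzOnWith L (fun q : ℝ × ℝ => vx q.1 q.2) (Icc 0 T ×ˢ Icc 0 1))
    (hvlb : ∀ t ∈ Ici (0:ℝ), ∀ x ∈ Icc (0:ℝ) 1, vmin ≤ v t x)
    (hwcont : ContinuousOn (fun q : ℝ × ℝ => w q.1 q.2) (Ici 0 ×ˢ Icc 0 1))
    (hwtcont : ContinuousOn (fun q : ℝ × ℝ => wt q.1 q.2) (Ici 0 ×ˢ Icc 0 1))
    (hwxcont : ContinuousOn (fun q : ℝ × ℝ => wx q.1 q.2) (Ici 0 ×ˢ Icc 0 1))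
    (hwd : ∀ t ∈ Ici (0:ℝ), ∀ x ∈ Icc (0:ℝ) 1,
      HasDerivWithinAt (fun s => w s x) (wt t x) (Ici 0) t ∧
      HasDerivWithinAt (fun y => w t y) (wx t x) (Icc 0 1) x)
    (hpde : ∀ t ∈ Ici (0:ℝ), ∀ x ∈ Icc (0:ℝ) 1, wt t x + v t x * wx t x = 0)
    (hbc : ∀ t ∈ Ici (0:ℝ), w t 0 = 0) :
    ∀ t : ℝ, vmin⁻¹ ≤ t → ∀ x ∈ Icc (0:ℝ) 1, w t x = 0 :=
  stmt4_general vmin hvmin v vt vx w wt wx hvxcont hvd hvlb hwcont hwtcont hwxcont hwd hpde hbc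
end

section
/- Let c > 0, ρ_eq > 0 and K > 0 be constants, and let ρ, v ∈ C¹(ℝ₊ × [0,1]) with ρ(t,x) > 0 and c + v(t,x) > 0 for all (t,x) ∈ ℝ₊ × [0,1], satisfying ∂ρ/∂t(t,x) + v(t,x)·∂ρ/∂x(t,x) + ρ(t,x)·∂v/∂x(t,x) = 0 and ∂v/∂t(t,x) − c·∂v/∂x(t,x) = 0 for all (t,x) ∈ ℝ₊ × [0,1]. Define w(t,x) := ln(ρ(t,x)·(c + v(t,x))/(K·ρ_eq)). Then w ∈ C¹(ℝ₊ × [0,1]) and ∂w/∂t(t,x) + v(t,x)·∂w/∂x(t,x) = 0 for all (t,x) ∈ ℝ₊ × [0,1]. -/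
open Set

/-
The transport equation for `v` gives `∂ₜv + v ∂ₓv = (c + v) ∂ₓv`, so along the characteristic
derivative `∂ₜ + v ∂ₓ` the quantity `log (c + v)` changes at rate `∂ₓv`, while the conservation
law says that `log ρ` changes at rate `-∂ₓv`. Hence `w = log ρ + log (c + v) - log (K ρeq)` is
transported by `∂ₜ + v ∂ₓ`.
-/

section LogProduct

variable {f g : ℝ → ℝ} {s : Set ℝ} {k : ℝ}

theorem HasDerivWithinAt.log_mul_div_const {t a b : ℝ} (hf : HasDerivWithinAt f a s t)
    (hg : HasDerivWithinAt g b s t) (hft : f t ≠ 0) (hgt : g t ≠ 0) (hk : k ≠ 0) :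
    HasDerivWithinAt (fun y => Real.log (f y * g y / k)) (a / f t + b / g t) s t := by
  convert ((hf.mul hg).div_const k).log (by simp [hft, hgt, hk]) using 1
  · rfl
  · simp only [Pi.mul_apply]
    field_simp

variable {α : Type*} [TopologicalSpace α] {F G F' G' : α → ℝ} {S : Set α}

theorem ContinuousOn.log_mul_div_const (hF : ContinuousOn F S) (hG : ContinuousOn G S)
    (hF0 : ∀ q ∈ S, F q ≠ 0) (hG0 : ∀ q ∈ S, G q ≠ 0) (hk : k ≠ 0) :
    ContinuousOn (fun q => Real.log (F q * G q / k)) S :=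
  ((hF.mul hG).div_const k).log fun q hq => by simp [hF0 q hq, hG0 q hq, hk]

theorem ContinuousOn.div_add_div (hF' : ContinuousOn F' S) (hF : ContinuousOn F S)
    (hG' : ContinuousOn G' S) (hG : ContinuousOn G S) (hF0 : ∀ q ∈ S, F q ≠ 0)
    (hG0 : ∀ q ∈ S, G q ≠ 0) :
    ContinuousOn (fun q => F' q / F q + G' q / G q) S :=
  (hF'.div hF hF0).add (hG'.div hG hG0)

end LogProduct

theorem riemann_coordinate_transport {c ρ v ρt ρx vt vx : ℝ} (hρ : ρ ≠ 0) (hcv : c + v ≠ 0)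
    (hmass : ρt + v * ρx + ρ * vx = 0) (hvel : vt - c * vx = 0) :
    (ρt / ρ + vt / (c + v)) + v * (ρx / ρ + vx / (c + v)) = 0 := by
  have hρ_rate : ρt / ρ + v * (ρx / ρ) = -vx := by
    field_simp
    linarith
  have hv_rate : vt / (c + v) + v * (vx / (c + v)) = vx := by
    field_simp
    linarith
  linarith

theorem stmt8_general (c ρeq K : ℝ) (hρeq : 0 < ρeq) (hK : 0 < K)
    (ρ v ρt ρx vt vx : ℝ → ℝ → ℝ)
    (hρcont : ContinuousOn (fun q : ℝ × ℝ => ρ q.1 q.2) (Ici 0 ×ˢ Icc 0 1))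
    (hvcont : ContinuousOn (fun q : ℝ × ℝ => v q.1 q.2) (Ici 0 ×ˢ Icc 0 1))
    (hρtcont : ContinuousOn (fun q : ℝ × ℝ => ρt q.1 q.2) (Ici 0 ×ˢ Icc 0 1))
    (hρxcont : ContinuousOn (fun q : ℝ × ℝ => ρx q.1 q.2) (Ici 0 ×ˢ Icc 0 1))
    (hvtcont : ContinuousOn (fun q : ℝ × ℝ => vt q.1 q.2) (Ici 0 ×ˢ Icc 0 1))
    (hvxcont : ContinuousOn (fun q : ℝ × ℝ => vx q.1 q.2) (Ici 0 ×ˢ Icc 0 1))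
    (hpos : ∀ t ∈ Ici (0:ℝ), ∀ x ∈ Icc (0:ℝ) 1, 0 < ρ t x ∧ 0 < c + v t x)
    (hd : ∀ t ∈ Ici (0:ℝ), ∀ x ∈ Icc (0:ℝ) 1,
      HasDerivWithinAt (fun s => ρ s x) (ρt t x) (Ici 0) t ∧
      HasDerivWithinAt (fun y => ρ t y) (ρx t x) (Icc 0 1) x ∧
      HasDerivWithinAt (fun s => v s x) (vt t x) (Ici 0) t ∧
      HasDerivWithinAt (fun y => v t y) (vx t x) (Icc 0 1) x)
    (hpde1 : ∀ t ∈ Ici (0:ℝ), ∀ x ∈ Icc (0:ℝ) 1,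
      ρt t x + v t x * ρx t x + ρ t x * vx t x = 0)
    (hpde2 : ∀ t ∈ Ici (0:ℝ), ∀ x ∈ Icc (0:ℝ) 1, vt t x - c * vx t x = 0) :
    ∃ wt wx : ℝ → ℝ → ℝ,
      ContinuousOn
        (fun q : ℝ × ℝ => Real.log (ρ q.1 q.2 * (c + v q.1 q.2) / (K * ρeq)))
        (Ici 0 ×ˢ Icc 0 1) ∧
      ContinuousOn (fun q : ℝ × ℝ => wt q.1 q.2) (Ici 0 ×ˢ Icc 0 1) ∧
      ContinuousOn (fun q : ℝ × ℝ => wx q.1 q.2) (Ici 0 ×ˢ Icc 0 1) ∧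
      ∀ t ∈ Ici (0:ℝ), ∀ x ∈ Icc (0:ℝ) 1,
        HasDerivWithinAt (fun s => Real.log (ρ s x * (c + v s x) / (K * ρeq)))
          (wt t x) (Ici 0) t ∧
        HasDerivWithinAt (fun y => Real.log (ρ t y * (c + v t y) / (K * ρeq)))
          (wx t x) (Icc 0 1) x ∧
        wt t x + v t x * wx t x = 0 := by
  have hρ0 : ∀ q ∈ Ici (0:ℝ) ×ˢ Icc (0:ℝ) 1, ρ q.1 q.2 ≠ 0 := fun q hq =>
    (hpos q.1 hq.1 q.2 hq.2).1.ne'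
  have hcv0 : ∀ q ∈ Ici (0:ℝ) ×ˢ Icc (0:ℝ) 1, c + v q.1 q.2 ≠ 0 := fun q hq =>
    (hpos q.1 hq.1 q.2 hq.2).2.ne'
  have hKρ : K * ρeq ≠ 0 := (mul_pos hK hρeq).ne'
  have hcvcont := continuousOn_const (c := c) |>.add hvcont
  refine ⟨fun t x => ρt t x / ρ t x + vt t x / (c + v t x),
    fun t x => ρx t x / ρ t x + vx t x / (c + v t x),
    hρcont.log_mul_div_const hcvcont hρ0 hcv0 hKρ,
    hρtcont.div_add_div hρcont hvtcont hcvcont hρ0 hcv0,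
    hρxcont.div_add_div hρcont hvxcont hcvcont hρ0 hcv0, fun t ht x hx => ?_⟩
  obtain ⟨hρt, hρx, hvt, hvx⟩ := hd t ht x hx
  have hρ : ρ t x ≠ 0 := hρ0 (t, x) ⟨ht, hx⟩
  have hcv : c + v t x ≠ 0 := hcv0 (t, x) ⟨ht, hx⟩
  exact ⟨hρt.log_mul_div_const (hvt.const_add c) hρ hcv hKρ,
    hρx.log_mul_div_const (hvx.const_add c) hρ hcv hKρ,
    riemann_coordinate_transport hρ hcv (hpde1 t ht x hx) (hpde2 t ht x hx)⟩

/-- The nonlinear change of variables `w = ln (ρ (c + v) / (K ρeq))` transforms the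
vehicle conservation law `∂ρ/∂t + v ∂ρ/∂x + ρ ∂v/∂x = 0` coupled with the backward
transport equation `∂v/∂t - c ∂v/∂x = 0` into the forward transport equation
`∂w/∂t + v ∂w/∂x = 0`, and `w` is `C¹` on `ℝ₊ × [0,1]`. -/
theorem stmt8 (c ρeq K : ℝ) (hc : 0 < c) (hρeq : 0 < ρeq) (hK : 0 < K)
    (ρ v ρt ρx vt vx : ℝ → ℝ → ℝ)
    (hρcont : ContinuousOn (fun q : ℝ × ℝ => ρ q.1 q.2) (Ici 0 ×ˢ Icc 0 1))
    (hvcont : ContinuousOn (fun q : ℝ × ℝ => v q.1 q.2) (Ici 0 ×ˢ Icc 0 1))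
    (hρtcont : ContinuousOn (fun q : ℝ × ℝ => ρt q.1 q.2) (Ici 0 ×ˢ Icc 0 1))
    (hρxcont : ContinuousOn (fun q : ℝ × ℝ => ρx q.1 q.2) (Ici 0 ×ˢ Icc 0 1))
    (hvtcont : ContinuousOn (fun q : ℝ × ℝ => vt q.1 q.2) (Ici 0 ×ˢ Icc 0 1))
    (hvxcont : ContinuousOn (fun q : ℝ × ℝ => vx q.1 q.2) (Ici 0 ×ˢ Icc 0 1))
    (hpos : ∀ t ∈ Ici (0:ℝ), ∀ x ∈ Icc (0:ℝ) 1, 0 < ρ t x ∧ 0 < c + v t x)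
    (hd : ∀ t ∈ Ici (0:ℝ), ∀ x ∈ Icc (0:ℝ) 1,
      HasDerivWithinAt (fun s => ρ s x) (ρt t x) (Ici 0) t ∧
      HasDerivWithinAt (fun y => ρ t y) (ρx t x) (Icc 0 1) x ∧
      HasDerivWithinAt (fun s => v s x) (vt t x) (Ici 0) t ∧
      HasDerivWithinAt (fun y => v t y) (vx t x) (Icc 0 1) x)
    (hpde1 : ∀ t ∈ Ici (0:ℝ), ∀ x ∈ Icc (0:ℝ) 1,
      ρt t x + v t x * ρx t x + ρ t x * vx t x = 0)
    (hpde2 : ∀ t ∈ Ici (0:ℝ), ∀ x ∈ Icc (0:ℝ) 1, vt t x - c * vx t x = 0) :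
    ∃ wt wx : ℝ → ℝ → ℝ,
      ContinuousOn
        (fun q : ℝ × ℝ => Real.log (ρ q.1 q.2 * (c + v q.1 q.2) / (K * ρeq)))
        (Ici 0 ×ˢ Icc 0 1) ∧
      ContinuousOn (fun q : ℝ × ℝ => wt q.1 q.2) (Ici 0 ×ˢ Icc 0 1) ∧
      ContinuousOn (fun q : ℝ × ℝ => wx q.1 q.2) (Ici 0 ×ˢ Icc 0 1) ∧
      ∀ t ∈ Ici (0:ℝ), ∀ x ∈ Icc (0:ℝ) 1,
        HasDerivWithinAt (fun s => Real.log (ρ s x * (c + v s x) / (K * ρeq)))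
          (wt t x) (Ici 0) t ∧
        HasDerivWithinAt (fun y => Real.log (ρ t y * (c + v t y) / (K * ρeq)))
          (wx t x) (Icc 0 1) x ∧
        wt t x + v t x * wx t x = 0 :=
  stmt8_general c ρeq K hρeq hK ρ v ρt ρx vt vx hρcont hvcont hρtcont hρxcont hvtcont hvxcont hpos
    hd hpde1 hpde2
end

section
/- Let A, b > 0, ρ_max > 0 and ε ∈ (0, ρ_max) with 1 ≤ b(ρ_max − ε), and let f(ρ) = A·exp(−bρ). Let h: ℝ₊ → ℝ be a non-decreasing function with h(s) = s for s ∈ [0, ρ_max − ε] and h(s) = ρ_max for s ≥ ρ_max. If q_eq > 0 satisfies A·ρ_max·exp(−b·ρ_max) ≤ q_eq ≤ (A/b)·exp(−1), then the equation ρ = h(q_eq/f(ρ)) has at least two distinct positive solutions: one solution in the interval (0, b⁻¹], and the solution ρ = ρ_max. -/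
/-!
The map `g ρ = q_eq / f ρ` is positive and satisfies `g b⁻¹ ≤ b⁻¹` because `q_eq ≤ b⁻¹ f b⁻¹`,
so it has a fixed point in `(0, b⁻¹]`; there `h` is the identity since `b⁻¹ ≤ ρmax - ε`.
The lower bound `ρmax f ρmax ≤ q_eq` gives `ρmax ≤ g ρmax`, where `h` is saturated.
-/

open Set Function

theorem exists_mem_Ioc_isFixedPt {α : Type*} [ConditionallyCompleteLinearOrder α]
    [TopologicalSpace α] [OrderTopology α] [DenselyOrdered α] {a b : α} {f : α → α}
    (hf : ContinuousOn f (Icc a b)) (hle : a ≤ b) (ha : a < f a) (hb : f b ≤ b) :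
    ∃ c ∈ Ioc a b, IsFixedPt f c := by
  obtain ⟨c, ⟨hac, hcb⟩, hc⟩ := exists_mem_Icc_isFixedPt hf hle ha.le hb
  refine ⟨c, ⟨hac.lt_of_ne ?_, hcb⟩, hc⟩
  rintro rfl
  exact ha.ne' hc

theorem div_mul_exp_neg_mul_inv_le_inv {A b q : ℝ} (hA : 0 < A) (hb : 0 < b)
    (hq : q ≤ A / b * Real.exp (-1)) : q / (A * Real.exp (-b * b⁻¹)) ≤ b⁻¹ := by
  rw [neg_mul, mul_inv_cancel₀ hb.ne', div_le_iff₀ (by positivity)]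
  calc q ≤ A / b * Real.exp (-1) := hq
    _ = b⁻¹ * (A * Real.exp (-1)) := by ring

theorem stmt10_general (A b ρmax ε : ℝ) (hA : 0 < A) (hb : 0 < b)
    (hε : ε ∈ Ioo 0 ρmax) (h1 : 1 ≤ b * (ρmax - ε))
    (h : ℝ → ℝ)
    (hid : ∀ s ∈ Icc (0:ℝ) (ρmax - ε), h s = s)
    (hsat : ∀ s, ρmax ≤ s → h s = ρmax)
    (qeq : ℝ) (hq : 0 < qeq)
    (hql : A * ρmax * Real.exp (-b * ρmax) ≤ qeq)
    (hqu : qeq ≤ A / b * Real.exp (-1)) :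
    (∃ ρ₁ ∈ Ioc (0:ℝ) b⁻¹,
      ρ₁ = h (qeq / (A * Real.exp (-b * ρ₁))) ∧ ρ₁ ≠ ρmax) ∧
    ρmax = h (qeq / (A * Real.exp (-b * ρmax))) := by
  set g : ℝ → ℝ := fun ρ => qeq / (A * Real.exp (-b * ρ))
  have hg_cont : Continuous g := by
    refine continuous_const.div (by fun_prop) fun ρ => ?_
    positivity
  have hinv_le : b⁻¹ ≤ ρmax - ε := by rwa [inv_le_iff_one_le_mul₀ hb, mul_comm]
  obtain ⟨ρ₁, ⟨hρ₁_pos, hρ₁_le⟩, hρ₁_fix⟩ :=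
    exists_mem_Ioc_isFixedPt hg_cont.continuousOn (inv_pos.2 hb).le (by positivity)
      (div_mul_exp_neg_mul_inv_le_inv hA hb hqu)
  have hρ₁_lt : ρ₁ < ρmax := by linarith [hε.1]
  refine ⟨⟨ρ₁, ⟨hρ₁_pos, hρ₁_le⟩, ?_, hρ₁_lt.ne⟩, ?_⟩
  · have hg_mem : g ρ₁ ∈ Icc 0 (ρmax - ε) := by
      rw [hρ₁_fix.eq]
      exact ⟨hρ₁_pos.le, hρ₁_le.trans hinv_le⟩
    rw [hid _ hg_mem, hρ₁_fix.eq]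
  · have hρmax_le : ρmax ≤ g ρmax := by
      rw [le_div_iff₀ (by positivity)]
      linarith
    rw [hsat _ hρmax_le]

/-- For the Underwood fundamental diagram `f ρ = A exp (-b ρ)` and the inlet saturation
function `h`, if `A ρmax exp(-b ρmax) ≤ q_eq ≤ (A/b) exp(-1)` and `1 ≤ b (ρmax - ε)`,
then the equilibrium equation `ρ = h (q_eq / f ρ)` has at least two distinct positive
solutions: one in `(0, b⁻¹]` and `ρ = ρmax`. -/
theorem stmt10 (A b ρmax ε : ℝ) (hA : 0 < A) (hb : 0 < b) (hρmax : 0 < ρmax)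
    (hε : ε ∈ Ioo 0 ρmax) (h1 : 1 ≤ b * (ρmax - ε))
    (h : ℝ → ℝ) (hmono : MonotoneOn h (Ici 0))
    (hid : ∀ s ∈ Icc (0:ℝ) (ρmax - ε), h s = s)
    (hsat : ∀ s, ρmax ≤ s → h s = ρmax)
    (qeq : ℝ) (hq : 0 < qeq)
    (hql : A * ρmax * Real.exp (-b * ρmax) ≤ qeq)
    (hqu : qeq ≤ A / b * Real.exp (-1)) :
    (∃ ρ₁ ∈ Ioc (0:ℝ) b⁻¹,
      ρ₁ = h (qeq / (A * Real.exp (-b * ρ₁))) ∧ ρ₁ ≠ ρmax) ∧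
    ρmax = h (qeq / (A * Real.exp (-b * ρmax))) :=
  stmt10_general A b ρmax ε hA hb hε h1 h hid hsat qeq hq hql hqu
end

section
/- Let A, b, c > 0 be constants with A ≤ c·exp(2). Then the function F(ρ) := ρ·(c + A·exp(−bρ)) is strictly increasing on [0, ∞). -/
open Set

/-! With `t = bρ`, `F'(ρ) = c + A (1 - t) e^{-t}`, and `(1 - t) e^{-t}` attains its minimum
`-e^{-2}` only at `t = 2` (this is `t - 1 < e^{t-2}` for `t ≠ 2`). Hence `A ≤ c e²` makes `F'`
positive away from the single point `ρ = 2 / b`, which is enough for strict monotonicity. -/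

lemma strictMono_of_hasDerivAt_pos_of_ne {f f' : ℝ → ℝ} (a : ℝ)
    (hf : ∀ x, HasDerivAt f (f' x) x) (hf' : ∀ x, x ≠ a → 0 < f' x) : StrictMono f := by
  have hcont : Continuous f := continuous_iff_continuousAt.2 fun x ↦ (hf x).continuousAt
  refine StrictMonoOn.Iic_union_Ici (a := a) ?_ ?_
  · refine strictMonoOn_of_hasDerivWithinAt_pos (convex_Iic a) hcont.continuousOn
      (fun x _ ↦ (hf x).hasDerivWithinAt) fun x hx ↦ hf' x ?_
    rw [interior_Iic] at hx
    exact hx.ne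
  · refine strictMonoOn_of_hasDerivWithinAt_pos (convex_Ici a) hcont.continuousOn
      (fun x _ ↦ (hf x).hasDerivWithinAt) fun x hx ↦ hf' x ?_
    rw [interior_Ici] at hx
    exact hx.ne'

lemma Real.neg_exp_neg_two_lt_one_sub_mul_exp_neg {t : ℝ} (ht : t ≠ 2) :
    -Real.exp (-2) < (1 - t) * Real.exp (-t) := by
  have hlt : t - 1 < Real.exp (t - 2) := by
    linarith [Real.add_one_lt_exp (sub_ne_zero.2 ht)]
  have hsplit : Real.exp (-2) = Real.exp (t - 2) * Real.exp (-t) := by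
    rw [← Real.exp_add]; ring_nf
  rw [hsplit]
  nlinarith [Real.exp_pos (-t)]

lemma hasDerivAt_mul_const_add_mul_exp (A b c ρ : ℝ) :
    HasDerivAt (fun ρ : ℝ ↦ ρ * (c + A * Real.exp (-b * ρ)))
      (c + A * ((1 - b * ρ) * Real.exp (-(b * ρ)))) ρ := by
  have hexp : HasDerivAt (fun ρ : ℝ ↦ Real.exp (-b * ρ)) (Real.exp (-b * ρ) * (-b)) ρ :=
    ((hasDerivAt_id ρ).const_mul (-b)).exp.congr_deriv (by simp)
  refine ((hasDerivAt_id' ρ).mul ((hexp.const_mul A).const_add c)).congr_deriv ?_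
  rw [neg_mul]
  ring

lemma const_add_mul_one_sub_mul_exp_neg_pos {A c t : ℝ} (hA : 0 < A) (hAc : A ≤ c * Real.exp 2)
    (ht : t ≠ 2) : 0 < c + A * ((1 - t) * Real.exp (-t)) := by
  have hc : A * Real.exp (-2) ≤ c := by
    calc A * Real.exp (-2) ≤ c * Real.exp 2 * Real.exp (-2) := by gcongr
      _ = c := by rw [mul_assoc, ← Real.exp_add]; simp
  nlinarith [Real.neg_exp_neg_two_lt_one_sub_mul_exp_neg ht]

theorem stmt11_general (A b c : ℝ) (hA : 0 < A)
    (hAc : A ≤ c * Real.exp 2) :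
    StrictMonoOn (fun ρ : ℝ => ρ * (c + A * Real.exp (-b * ρ))) (Ici 0) := by
  refine (strictMono_of_hasDerivAt_pos_of_ne (2 / b) (hasDerivAt_mul_const_add_mul_exp A b c)
    fun ρ hρ ↦ const_add_mul_one_sub_mul_exp_neg_pos hA hAc fun hbρ ↦ hρ ?_).strictMonoOn _
  have hb : b ≠ 0 := left_ne_zero_of_mul (by rw [hbρ]; norm_num)
  rw [eq_div_iff hb, mul_comm, hbρ]

/-- If `A ≤ c exp 2`, then `F(ρ) = ρ (c + A exp (-b ρ))` is strictly increasing on `[0, ∞)`. -/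
theorem stmt11 (A b c : ℝ) (hA : 0 < A) (hb : 0 < b) (hc : 0 < c)
    (hAc : A ≤ c * Real.exp 2) :
    StrictMonoOn (fun ρ : ℝ => ρ * (c + A * Real.exp (-b * ρ))) (Ici 0) :=
  stmt11_general A b c hA hAc
end

section
/- Let c > 0 and ρ_eq > 0 be constants and let f: ℝ₊ → ℝ be continuous, positive and non-increasing. If the function F(ρ) := ρ·(c + f(ρ)) is strictly increasing on the closed interval [ρ_eq·(c + f(ρ_eq))/(c + f(0)), ρ_eq·(c + f(ρ_eq))/c], then for every v ≥ 0 with v ≠ f(ρ_eq) it holds that (v − f(ρ_eq·(c + f(ρ_eq))/(c + v)))·(v − f(ρ_eq)) > 0. -/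
open Set

/-!
Put `A = F ρeq` and `ρ_v = A / (c + v)`, so that `ρ_v (c + v) = A`. Then
`F ρ_v - F ρeq = ρ_v (f ρ_v - v)`, hence the sign of `f ρ_v - v` is that of `ρ_v - ρeq` when `F`
is strictly increasing, which is the sign of `f ρeq - v`. The interval in the hypothesis is the
range of `w ↦ A / (c + w)` on `[0, f 0]`, so it contains `ρeq` and every `ρ_v` with `v ≤ f 0`;
for `v > f 0` one has `f ρ_v ≤ f 0 < v` directly.
-/

lemma div_add_mem_Icc {A c w u : ℝ} (hA : 0 ≤ A) (hc : 0 < c) (hw : 0 ≤ w) (hwu : w ≤ u) :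
    A / (c + w) ∈ Icc (A / (c + u)) (A / c) :=
  ⟨div_le_div_of_nonneg_left hA (by linarith) (by linarith),
    div_le_div_of_nonneg_left hA hc (by linarith)⟩

section StrictMonoFlux

variable {s : Set ℝ} {c v ρ ρ' : ℝ} {f : ℝ → ℝ}

lemma lt_apply_of_strictMonoOn_mul_add (hF : StrictMonoOn (fun x => x * (c + f x)) s)
    (hρ : ρ ∈ s) (hρ' : ρ' ∈ s) (hlt : ρ < ρ') (hρ'_pos : 0 < ρ')
    (hflux : ρ' * (c + v) = ρ * (c + f ρ)) : v < f ρ' := by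
  have h : ρ' * (c + v) < ρ' * (c + f ρ') := hflux ▸ hF hρ hρ' hlt
  linarith [lt_of_mul_lt_mul_left h hρ'_pos.le]

lemma apply_lt_of_strictMonoOn_mul_add (hF : StrictMonoOn (fun x => x * (c + f x)) s)
    (hρ : ρ ∈ s) (hρ' : ρ' ∈ s) (hlt : ρ' < ρ) (hρ'_pos : 0 < ρ')
    (hflux : ρ' * (c + v) = ρ * (c + f ρ)) : f ρ' < v := by
  have h : ρ' * (c + f ρ') < ρ' * (c + v) := hflux ▸ hF hρ' hρ hlt
  linarith [lt_of_mul_lt_mul_left h hρ'_pos.le]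

end StrictMonoFlux

theorem stmt12_general (c ρeq : ℝ) (hc : 0 < c) (hρeq : 0 < ρeq)
    (f : ℝ → ℝ)
    (hfpos : ∀ x ∈ Ici (0:ℝ), 0 < f x)
    (hfanti : AntitoneOn f (Ici 0))
    (hF : StrictMonoOn (fun ρ : ℝ => ρ * (c + f ρ))
      (Icc (ρeq * (c + f ρeq) / (c + f 0)) (ρeq * (c + f ρeq) / c))) :
    ∀ v : ℝ, 0 ≤ v → v ≠ f ρeq →
      0 < (v - f (ρeq * (c + f ρeq) / (c + v))) * (v - f ρeq) := by
  intro v hv hne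
  set A := ρeq * (c + f ρeq)
  have hfρeq : 0 < f ρeq := hfpos ρeq hρeq.le
  have hfρeq_le : f ρeq ≤ f 0 := hfanti self_mem_Ici hρeq.le hρeq.le
  have hA : 0 < A := by positivity
  have hρeq_eq : A / (c + f ρeq) = ρeq := mul_div_cancel_right₀ _ (by positivity)
  have hρeq_mem : ρeq ∈ Icc (A / (c + f 0)) (A / c) :=
    hρeq_eq ▸ div_add_mem_Icc hA.le hc hfρeq.le hfρeq_le
  have hρv_pos : 0 < A / (c + v) := by positivity
  have hflux : A / (c + v) * (c + v) = A := div_mul_cancel₀ _ (by positivity)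
  rcases hne.lt_or_gt with hlt | hgt
  · have hρv_gt : ρeq < A / (c + v) :=
      hρeq_eq ▸ div_lt_div_of_pos_left hA (by positivity) (by linarith)
    have hv_lt_f : v < f (A / (c + v)) := lt_apply_of_strictMonoOn_mul_add hF hρeq_mem
      (div_add_mem_Icc hA.le hc hv (by linarith)) hρv_gt hρv_pos hflux
    exact mul_pos_of_neg_of_neg (by linarith) (by linarith)
  · have hfv_lt : f (A / (c + v)) < v := by
      rcases le_or_gt v (f 0) with hv0 | hv0
      · have hρv_lt : A / (c + v) < ρeq :=
          hρeq_eq ▸ div_lt_div_of_pos_left hA (by positivity) (by linarith)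
        exact apply_lt_of_strictMonoOn_mul_add hF hρeq_mem (div_add_mem_Icc hA.le hc hv hv0)
          hρv_lt hρv_pos hflux
      · exact (hfanti self_mem_Ici hρv_pos.le hρv_pos.le).trans_lt hv0
    exact mul_pos (by linarith) (by linarith)

/-- If `F(ρ) = ρ (c + f ρ)` is strictly increasing on the interval
`[ρeq (c + f ρeq)/(c + f 0), ρeq (c + f ρeq)/c]`, then the stabilizability inequality
`(v - f(ρeq (c + f ρeq)/(c + v))) (v - f ρeq) > 0` holds for all `v ≥ 0`, `v ≠ f ρeq`. -/
theorem stmt12 (c ρeq : ℝ) (hc : 0 < c) (hρeq : 0 < ρeq)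
    (f : ℝ → ℝ) (hfc : ContinuousOn f (Ici 0))
    (hfpos : ∀ x ∈ Ici (0:ℝ), 0 < f x)
    (hfanti : AntitoneOn f (Ici 0))
    (hF : StrictMonoOn (fun ρ : ℝ => ρ * (c + f ρ))
      (Icc (ρeq * (c + f ρeq) / (c + f 0)) (ρeq * (c + f ρeq) / c))) :
    ∀ v : ℝ, 0 ≤ v → v ≠ f ρeq →
      0 < (v - f (ρeq * (c + f ρeq) / (c + v))) * (v - f ρeq) :=
  stmt12_general c ρeq hc hρeq f hfpos hfanti hF
end

section
/- Let c > 0, μ > 0 and ρ_eq > 0 be constants and let f: ℝ₊ → (0,∞) be C¹, bounded and non-increasing. Assume that (v − f(ρ_eq·(c + f(ρ_eq))/(c + v)))·(v − f(ρ_eq)) > 0 for all v ≥ 0 with v ≠ f(ρ_eq). Let ξ: ℝ₊ → ℝ be a C¹ solution of the scalar ODE ξ̇(t) = −μ·(ξ(t) − f(ρ_eq·(c + f(ρ_eq))/(c + ξ(t)))) with ξ(0) = ξ₀ ≥ 0. Then ξ(t) ≥ 0 for all t ≥ 0, ξ is monotone (non-decreasing if ξ₀ < f(ρ_eq), non-increasing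 if ξ₀ > f(ρ_eq)), and lim_{t→∞} ξ(t) = f(ρ_eq); i.e., f(ρ_eq) is a globally asymptotically stable equilibrium point of this ODE on ℝ₊. -/
/-!
The right-hand side `φ` of the ODE is positive on `(-c, f ρeq)` (below `0` because `f > 0`,
above `0` by the sign condition), negative on `(f ρeq, ∞)` and vanishes at `f ρeq`. Hence a
solution can neither cross `0` downwards nor cross `f ρeq` in either direction, so it is monotone
and bounded; its limit `L` then satisfies `φ L = 0`, which forces `L = f ρeq`.
-/

open Set Filter Topology

lemma image_le_of_hasDerivWithinAt_nonpos_above {f f' : ℝ → ℝ} {a b b' : ℝ} (hbb' : b < b')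
    (hf : ∀ t ∈ Ici a, HasDerivWithinAt f (f' t) (Ici a) t)
    (hf' : ∀ t ∈ Ici a, f t ∈ Ioo b b' → f' t ≤ 0) (ha : f a ≤ b) :
    ∀ t ∈ Ici a, f t ≤ b := by
  intro t ht
  have hcont : ContinuousOn f (Icc a t) := fun x hx =>
    (hf x hx.1).continuousWithinAt.mono Icc_subset_Ici_self
  -- compare with the barriers `x ↦ b + ε (1 + x - a)`, which `f` can only touch inside `(b, b')`
  have barrier : ∀ ε, 0 < ε → ε * (1 + t - a) < b' - b → f t ≤ b + ε * (1 + t - a) := by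
    intro ε hε hεt
    refine image_le_of_deriv_right_lt_deriv_boundary' hcont
      (fun x hx => (hf x hx.1).mono (Ici_subset_Ici.2 hx.1)) (B := fun x => b + ε * (1 + x - a))
      (B' := fun _ => ε) (by linarith) (by fun_prop) (fun x _ => ?_) (fun x hx hfx => ?_)
      ⟨ht, le_rfl⟩
    · simpa using ((((hasDerivAt_id x).const_add 1).sub_const a).const_mul ε).const_add b
        |>.hasDerivWithinAt
    · have hmem : f x ∈ Ioo b b' := by
        rw [hfx]
        constructor <;> nlinarith [hx.1, hx.2]
      exact (hf' x hx.1 hmem).trans_lt hε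
  have hlim : Tendsto (fun ε => b + ε * (1 + t - a)) (𝓝[>] 0) (𝓝 b) := by
    have : Tendsto (fun ε => b + ε * (1 + t - a)) (𝓝 0) (𝓝 (b + 0 * (1 + t - a))) :=
      (by fun_prop : Continuous fun ε : ℝ => b + ε * (1 + t - a)).tendsto 0
    simpa using this.mono_left nhdsWithin_le_nhds
  have hta : 0 < 1 + t - a := by linarith [mem_Ici.1 ht]
  refine ge_of_tendsto hlim ?_
  filter_upwards [self_mem_nhdsWithin,
    nhdsWithin_le_nhds (Iio_mem_nhds (div_pos (sub_pos.2 hbb') hta))] with ε hε hεt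
  exact barrier ε hε ((lt_div_iff₀ hta).1 hεt)

lemma le_image_of_hasDerivWithinAt_nonneg_below {f f' : ℝ → ℝ} {a b b' : ℝ} (hbb' : b' < b)
    (hf : ∀ t ∈ Ici a, HasDerivWithinAt f (f' t) (Ici a) t)
    (hf' : ∀ t ∈ Ici a, f t ∈ Ioo b' b → 0 ≤ f' t) (ha : b ≤ f a) :
    ∀ t ∈ Ici a, b ≤ f t := by
  intro t ht
  have := image_le_of_hasDerivWithinAt_nonpos_above (f := -f) (f' := -f') (neg_lt_neg hbb')
    (fun t ht => (hf t ht).neg) (fun t ht hmem => neg_nonpos.2 <| hf' t ht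
      ⟨neg_lt_neg_iff.1 hmem.2, neg_lt_neg_iff.1 hmem.1⟩) (neg_le_neg ha) t ht
  simpa using this

lemma eq_zero_of_tendsto_of_tendsto_deriv {f f' : ℝ → ℝ} {L l : ℝ}
    (hderiv : ∀ᶠ t in atTop, HasDerivAt f (f' t) t) (hf : Tendsto f atTop (𝓝 L))
    (hf' : Tendsto f' atTop (𝓝 l)) : l = 0 := by
  by_contra hl
  have hl2 : 0 < |l| / 2 := by positivity
  obtain ⟨T, hT⟩ :=
    eventually_atTop.1 (hderiv.and (hf'.eventually (Metric.ball_mem_nhds l hl2)))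
  -- by the mean value theorem, the increments `f (t + 1) - f t` are eventually close to `l`
  have hstep : ∀ t ≥ T, dist (f (t + 1) - f t) l < |l| / 2 := by
    intro t ht
    obtain ⟨s, hs, hslope⟩ := exists_hasDerivAt_eq_slope f f' (lt_add_one t)
      (fun x hx => (hT x (ht.trans hx.1)).1.continuousAt.continuousWithinAt)
      (fun x hx => (hT x (ht.trans hx.1.le)).1)
    rw [add_sub_cancel_left, div_one] at hslope
    exact hslope ▸ (hT s (ht.trans hs.1.le)).2
  have hinc : Tendsto (fun t => f (t + 1) - f t) atTop (𝓝 0) := by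
    simpa using (hf.comp (tendsto_atTop_add_const_right _ 1 tendsto_id)).sub hf
  have := le_of_tendsto (hinc.dist tendsto_const_nhds)
    (eventually_atTop.2 ⟨T, fun t ht => (hstep t ht).le⟩)
  rw [dist_zero_left, Real.norm_eq_abs] at this
  linarith [abs_pos.2 hl]

lemma MonotoneOn.exists_tendsto_atTop {f : ℝ → ℝ} {a M : ℝ} (hf : MonotoneOn f (Ici a))
    (hM : ∀ t ∈ Ici a, f t ≤ M) : ∃ L, Tendsto f atTop (𝓝 L) := by
  have hmono : Monotone fun t => f (max a t) := fun x y hxy =>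
    hf (le_max_left a x) (le_max_left a y) (max_le_max le_rfl hxy)
  have hbdd : BddAbove (range fun t => f (max a t)) :=
    ⟨M, forall_mem_range.2 fun t => hM _ (le_max_left a t)⟩
  refine ⟨_, (tendsto_atTop_ciSup hmono hbdd).congr' ?_⟩
  filter_upwards [eventually_ge_atTop a] with t ht
  rw [max_eq_right ht]

lemma AntitoneOn.exists_tendsto_atTop {f : ℝ → ℝ} {a M : ℝ} (hf : AntitoneOn f (Ici a))
    (hM : ∀ t ∈ Ici a, M ≤ f t) : ∃ L, Tendsto f atTop (𝓝 L) := by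
  obtain ⟨L, hL⟩ := hf.neg.exists_tendsto_atTop fun t ht => neg_le_neg (hM t ht)
  exact ⟨-L, by simpa using hL.neg⟩

section AutonomousODE

variable {φ ξ : ℝ → ℝ} {B e : ℝ}

lemma solution_le_of_le_equilibrium (hneg : ∀ v ∈ Ioi e, φ v < 0)
    (hξ : ∀ t ∈ Ici (0:ℝ), HasDerivWithinAt ξ (φ (ξ t)) (Ici 0) t) (h0 : ξ 0 ≤ e) :
    ∀ t ∈ Ici (0:ℝ), ξ t ≤ e :=
  image_le_of_hasDerivWithinAt_nonpos_above (lt_add_one e) hξ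
    (fun _ _ hv => (hneg _ hv.1).le) h0

lemma le_solution_of_le {b : ℝ} (hpos : ∀ v ∈ Ioo B e, 0 < φ v)
    (hξ : ∀ t ∈ Ici (0:ℝ), HasDerivWithinAt ξ (φ (ξ t)) (Ici 0) t) (hb : b ∈ Ioc B e)
    (h0 : b ≤ ξ 0) : ∀ t ∈ Ici (0:ℝ), b ≤ ξ t :=
  le_image_of_hasDerivWithinAt_nonneg_below hb.1 hξ
    (fun _ _ hv => (hpos _ ⟨hv.1, hv.2.trans_le hb.2⟩).le) h0

lemma monotoneOn_solution (hpos : ∀ v ∈ Ioo B e, 0 < φ v) (hneg : ∀ v ∈ Ioi e, φ v < 0)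
    (he : φ e = 0) (hξ : ∀ t ∈ Ici (0:ℝ), HasDerivWithinAt ξ (φ (ξ t)) (Ici 0) t)
    (hB : B < ξ 0) (h0 : ξ 0 ≤ e) : MonotoneOn ξ (Ici 0) := by
  have hle := solution_le_of_le_equilibrium hneg hξ h0
  have hge := le_solution_of_le hpos hξ ⟨hB, h0⟩ le_rfl
  refine monotoneOn_of_hasDerivWithinAt_nonneg (f' := fun t => φ (ξ t)) (convex_Ici 0)
    (fun t ht => (hξ t ht).continuousWithinAt) (fun t ht => ?_) (fun t ht => ?_) <;>
    rw [interior_Ici, mem_Ioi] at ht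
  · rw [interior_Ici]
    exact (hξ t ht.le).mono Ioi_subset_Ici_self
  · rcases (hle t ht.le).lt_or_eq with h | h
    · exact (hpos _ ⟨hB.trans_le (hge t ht.le), h⟩).le
    · rw [h, he]

lemma antitoneOn_solution (hpos : ∀ v ∈ Ioo B e, 0 < φ v) (hneg : ∀ v ∈ Ioi e, φ v < 0)
    (he : φ e = 0) (hξ : ∀ t ∈ Ici (0:ℝ), HasDerivWithinAt ξ (φ (ξ t)) (Ici 0) t)
    (hBe : B < e) (h0 : e ≤ ξ 0) : AntitoneOn ξ (Ici 0) := by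
  have hge := le_solution_of_le hpos hξ ⟨hBe, le_rfl⟩ h0
  refine antitoneOn_of_hasDerivWithinAt_nonpos (f' := fun t => φ (ξ t)) (convex_Ici 0)
    (fun t ht => (hξ t ht).continuousWithinAt) (fun t ht => ?_) (fun t ht => ?_) <;>
    rw [interior_Ici, mem_Ioi] at ht
  · rw [interior_Ici]
    exact (hξ t ht.le).mono Ioi_subset_Ici_self
  · rcases (hge t ht.le).lt_or_eq with h | h
    · exact (hneg _ h).le
    · rw [← h, he]

lemma limit_eq_equilibrium {L : ℝ} (hpos : ∀ v ∈ Ioo B e, 0 < φ v)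
    (hneg : ∀ v ∈ Ioi e, φ v < 0) (hφL : ContinuousAt φ L)
    (hξ : ∀ t ∈ Ici (0:ℝ), HasDerivWithinAt ξ (φ (ξ t)) (Ici 0) t)
    (hL : Tendsto ξ atTop (𝓝 L)) (hBL : B < L) : L = e := by
  have hderiv : ∀ᶠ t in atTop, HasDerivAt ξ (φ (ξ t)) t := by
    filter_upwards [eventually_gt_atTop 0] with t ht
    exact (hξ t ht.le).hasDerivAt (Ici_mem_nhds ht)
  have hφ : φ L = 0 := eq_zero_of_tendsto_of_tendsto_deriv hderiv hL (hφL.tendsto.comp hL)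
  rcases lt_trichotomy L e with h | h | h
  · exact absurd hφ (hpos L ⟨hBL, h⟩).ne'
  · exact h
  · exact absurd hφ (hneg L h).ne

lemma tendsto_equilibrium (hpos : ∀ v ∈ Ioo B e, 0 < φ v) (hneg : ∀ v ∈ Ioi e, φ v < 0)
    (he : φ e = 0) (hφ : ∀ v ∈ Ioi B, ContinuousAt φ v)
    (hξ : ∀ t ∈ Ici (0:ℝ), HasDerivWithinAt ξ (φ (ξ t)) (Ici 0) t) (hBe : B < e)
    (hB : B < ξ 0) : Tendsto ξ atTop (𝓝 e) := by
  rcases le_total (ξ 0) e with h0 | h0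
  · have hmono := monotoneOn_solution hpos hneg he hξ hB h0
    obtain ⟨L, hL⟩ := hmono.exists_tendsto_atTop (solution_le_of_le_equilibrium hneg hξ h0)
    have hBL : B < L := hB.trans_le <| ge_of_tendsto hL <|
      eventually_atTop.2 ⟨0, fun t ht => hmono self_mem_Ici ht ht⟩
    rwa [← limit_eq_equilibrium hpos hneg (hφ L hBL) hξ hL hBL]
  · obtain ⟨L, hL⟩ := (antitoneOn_solution hpos hneg he hξ hBe h0).exists_tendsto_atTop
      (le_solution_of_le hpos hξ ⟨hBe, le_rfl⟩ h0)
    have hBL : B < L := hBe.trans_le <| ge_of_tendsto hL <|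
      eventually_atTop.2 ⟨0, le_solution_of_le hpos hξ ⟨hBe, le_rfl⟩ h0⟩
    rwa [← limit_eq_equilibrium hpos hneg (hφ L hBL) hξ hL hBL]

end AutonomousODE

noncomputable def outletField (c μ ρeq : ℝ) (f : ℝ → ℝ) (v : ℝ) : ℝ :=
  -μ * (v - f (ρeq * (c + f ρeq) / (c + v)))

section OutletField

variable {c μ ρeq : ℝ} {f : ℝ → ℝ}

lemma outletField_arg_pos (hc : 0 < c) (hρeq : 0 < ρeq) (hfpos : ∀ x ∈ Ici (0:ℝ), 0 < f x)
    {v : ℝ} (hv : -c < v) : 0 < ρeq * (c + f ρeq) / (c + v) :=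
  div_pos (mul_pos hρeq (by linarith [hfpos ρeq hρeq.le])) (by linarith)

lemma outletField_pos (hc : 0 < c) (hμ : 0 < μ) (hρeq : 0 < ρeq)
    (hfpos : ∀ x ∈ Ici (0:ℝ), 0 < f x)
    (hsign : ∀ v : ℝ, 0 ≤ v → v ≠ f ρeq →
      0 < (v - f (ρeq * (c + f ρeq) / (c + v))) * (v - f ρeq))
    {v : ℝ} (hv : v ∈ Ioo (-c) (f ρeq)) : 0 < outletField c μ ρeq f v := by
  suffices v - f (ρeq * (c + f ρeq) / (c + v)) < 0 from mul_pos_of_neg_of_neg (by linarith) this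
  rcases lt_or_ge v 0 with hv0 | hv0
  · linarith [hfpos _ (outletField_arg_pos hc hρeq hfpos hv.1).le]
  · exact neg_of_mul_pos_left (hsign v hv0 hv.2.ne) (by linarith [hv.2])

lemma outletField_neg (hμ : 0 < μ) (hρeq : 0 < ρeq) (hfpos : ∀ x ∈ Ici (0:ℝ), 0 < f x)
    (hsign : ∀ v : ℝ, 0 ≤ v → v ≠ f ρeq →
      0 < (v - f (ρeq * (c + f ρeq) / (c + v))) * (v - f ρeq))
    {v : ℝ} (hv : v ∈ Ioi (f ρeq)) : outletField c μ ρeq f v < 0 := by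
  have hv0 : 0 ≤ v := (hfpos ρeq hρeq.le).le.trans (le_of_lt hv)
  exact mul_neg_of_neg_of_pos (by linarith)
    (pos_of_mul_pos_left (hsign v hv0 (ne_of_gt hv)) (by linarith [mem_Ioi.1 hv]))

lemma outletField_self (hc : 0 < c) (hρeq : 0 < ρeq) (hfpos : ∀ x ∈ Ici (0:ℝ), 0 < f x) :
    outletField c μ ρeq f (f ρeq) = 0 := by
  have : c + f ρeq ≠ 0 := by linarith [hfpos ρeq hρeq.le]
  simp [outletField, mul_div_cancel_right₀ _ this]

lemma continuousAt_outletField (hc : 0 < c) (hρeq : 0 < ρeq)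
    (hfpos : ∀ x ∈ Ici (0:ℝ), 0 < f x) (hf : ContinuousOn f (Ici 0)) {v : ℝ}
    (hv : v ∈ Ioi (-c)) : ContinuousAt (outletField c μ ρeq f) v := by
  have harg := outletField_arg_pos hc hρeq hfpos hv
  have hfc : ContinuousAt f (ρeq * (c + f ρeq) / (c + v)) :=
    (hf _ harg.le).continuousAt (Ici_mem_nhds harg)
  have hden : c + v ≠ 0 := by linarith [mem_Ioi.1 hv]
  have harg_cont : ContinuousAt (fun w => ρeq * (c + f ρeq) / (c + w)) v :=
    continuousAt_const.div (continuousAt_const.add continuousAt_id) hden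
  exact continuousAt_const.mul (continuousAt_id.sub (hfc.comp_of_eq harg_cont rfl))

end OutletField

theorem stmt15_general (c μ ρeq : ℝ) (hc : 0 < c) (hμ : 0 < μ) (hρeq : 0 < ρeq)
    (f : ℝ → ℝ) (hf : ContDiffOn ℝ 1 f (Ici 0))
    (hfpos : ∀ x ∈ Ici (0:ℝ), 0 < f x)
    (hsign : ∀ v : ℝ, 0 ≤ v → v ≠ f ρeq →
      0 < (v - f (ρeq * (c + f ρeq) / (c + v))) * (v - f ρeq))
    (ξ : ℝ → ℝ) (ξ₀ : ℝ) (hξ₀ : 0 ≤ ξ₀) (hinit : ξ 0 = ξ₀)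
    (hode : ∀ t ∈ Ici (0:ℝ),
      HasDerivWithinAt ξ (-μ * (ξ t - f (ρeq * (c + f ρeq) / (c + ξ t)))) (Ici 0) t) :
    (∀ t ∈ Ici (0:ℝ), 0 ≤ ξ t) ∧
    (ξ₀ < f ρeq → MonotoneOn ξ (Ici 0)) ∧
    (f ρeq < ξ₀ → AntitoneOn ξ (Ici 0)) ∧
    Tendsto ξ atTop (nhds (f ρeq)) := by
  subst hinit
  have hξ : ∀ t ∈ Ici (0:ℝ),
      HasDerivWithinAt ξ (outletField c μ ρeq f (ξ t)) (Ici 0) t := hode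
  have hpos : ∀ v ∈ Ioo (-c) (f ρeq), 0 < outletField c μ ρeq f v :=
    fun _ hv => outletField_pos hc hμ hρeq hfpos hsign hv
  have hneg : ∀ v ∈ Ioi (f ρeq), outletField c μ ρeq f v < 0 :=
    fun _ hv => outletField_neg hμ hρeq hfpos hsign hv
  have he : outletField c μ ρeq f (f ρeq) = 0 := outletField_self hc hρeq hfpos
  have hcont : ∀ v ∈ Ioi (-c), ContinuousAt (outletField c μ ρeq f) v :=
    fun _ hv => continuousAt_outletField hc hρeq hfpos hf.continuousOn hv
  have hfρ : 0 < f ρeq := hfpos ρeq hρeq.le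
  have hcξ : -c < ξ 0 := by linarith
  exact ⟨le_solution_of_le hpos hξ ⟨by linarith, hfρ.le⟩ hξ₀,
    fun h => monotoneOn_solution hpos hneg he hξ hcξ h.le,
    fun h => antitoneOn_solution hpos hneg he hξ (by linarith) h.le,
    tendsto_equilibrium hpos hneg he hcont hξ (by linarith) hcξ⟩

/-- Global asymptotic stability of `f ρeq` for the outlet relaxation ODE
`ξ' = -μ (ξ - f(ρeq (c + f ρeq)/(c + ξ)))` under the sign condition (3.1):
solutions starting at `ξ₀ ≥ 0` remain non-negative, are monotone, and converge
to `f ρeq`. -/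
theorem stmt15 (c μ ρeq : ℝ) (hc : 0 < c) (hμ : 0 < μ) (hρeq : 0 < ρeq)
    (f : ℝ → ℝ) (hf : ContDiffOn ℝ 1 f (Ici 0))
    (hfpos : ∀ x ∈ Ici (0:ℝ), 0 < f x)
    (hfbdd : ∃ M, ∀ x ∈ Ici (0:ℝ), f x ≤ M)
    (hfanti : AntitoneOn f (Ici 0))
    (hsign : ∀ v : ℝ, 0 ≤ v → v ≠ f ρeq →
      0 < (v - f (ρeq * (c + f ρeq) / (c + v))) * (v - f ρeq))
    (ξ : ℝ → ℝ) (ξ₀ : ℝ) (hξ₀ : 0 ≤ ξ₀) (hinit : ξ 0 = ξ₀)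
    (hode : ∀ t ∈ Ici (0:ℝ),
      HasDerivWithinAt ξ (-μ * (ξ t - f (ρeq * (c + f ρeq) / (c + ξ t)))) (Ici 0) t) :
    (∀ t ∈ Ici (0:ℝ), 0 ≤ ξ t) ∧
    (ξ₀ < f ρeq → MonotoneOn ξ (Ici 0)) ∧
    (f ρeq < ξ₀ → AntitoneOn ξ (Ici 0)) ∧
    Tendsto ξ atTop (nhds (f ρeq)) :=
  stmt15_general c μ ρeq hc hμ hρeq f hf hfpos hsign ξ ξ₀ hξ₀ hinit hode
end

section
/- Let N ≥ 1 and m ≥ 1 be integers, let c > 0, μ ≥ 0, λ > 0, δ > 0 and v_max > 0 be constants with λ·c ≤ 1 and μ·δ ≤ 1, and let g: ℝ₊ × ℝ → ℝ satisfy 0 < g(0,w) ≤ g(v,w) ≤ v_max for all v ≥ 0, w ∈ ℝ. Let a: {0,…,m} × ℝ₊ → ℝ be a function, let real numbers v_i(k), w_i(k) for i = 0,…,N, k = 0,…,m satisfy the recursions w_i(k+1) = (1 − λ·v_i(k))·w_i(k) + λ·v_i(k)·w_{i−1}(k) for i = 1,…,N; v_i(k+1) = (1 − λc)·v_i(k)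 + λc·v_{i+1}(k) for i = 0,…,N−1; v_N(k+1) = (1 − μδ)·v_N(k) + μδ·g(v_N(k), w_N(k)); and w_0(k) = a(k, v_0(k)), for all k = 0,…,m−1. Assume 0 ≤ v_i(0) for all i and λ·V̄ ≤ 1, where V̄ := max(max_{i} v_i(0), v_max). Define W := max(max_i |w_i(0)|, B) with B := max{|a(k,v)| : k ∈ {0,…,m}, 0 ≤ v ≤ V̄}. Then for all i = 0,…,N and k = 0,…,m: (i) 0 ≤ v_i(k) ≤ V̄; (ii) |w_i(k)| ≤ W; (iii) v_i(k) ≥ min(min_j v_j(0), min{g(0,w) : |w| ≤ W}). -/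
/-!
Every update of the scheme is a convex combination of values from the previous time level: the
velocity is averaged with its right neighbour (weight `λc`) or, at the outlet, relaxed towards
`g` (weight `μδ`), and `w` is averaged with its left neighbour (weight `λ vᵢ ≤ λ V̄`). Hence
any interval containing the initial velocities and the range of `g` on `|w| ≤ W` is invariant
for `v`, and `[-W, W]`, which contains the inlet values `a(k, v)` for `v ∈ [0, V̄]`, is invariant
for `w`; induction on the time level gives all three bounds.
-/

open Set

lemma one_sub_mul_add_mul_mem_Icc {t a b lo hi : ℝ} (ht₀ : 0 ≤ t) (ht₁ : t ≤ 1)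
    (ha : a ∈ Icc lo hi) (hb : b ∈ Icc lo hi) : (1 - t) * a + t * b ∈ Icc lo hi :=
  convex_Icc lo hi ha hb (sub_nonneg.mpr ht₁) ht₀ (sub_add_cancel 1 t)

lemma abs_one_sub_mul_add_mul_le {t a b W : ℝ} (ht₀ : 0 ≤ t) (ht₁ : t ≤ 1)
    (ha : |a| ≤ W) (hb : |b| ≤ W) : |(1 - t) * a + t * b| ≤ W := by
  rw [abs_le] at *
  exact one_sub_mul_add_mul_mem_Icc ht₀ ht₁ ha hb

lemma velocity_step_mem_Icc {N : ℕ} {θ ρ gN lo hi : ℝ} {v v' : ℕ → ℝ}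
    (hθ₀ : 0 ≤ θ) (hθ₁ : θ ≤ 1) (hρ₀ : 0 ≤ ρ) (hρ₁ : ρ ≤ 1)
    (hinterior : ∀ i < N, v' i = (1 - θ) * v i + θ * v (i + 1))
    (houtlet : v' N = (1 - ρ) * v N + ρ * gN)
    (hv : ∀ i ≤ N, v i ∈ Icc lo hi) (hgN : gN ∈ Icc lo hi) :
    ∀ i ≤ N, v' i ∈ Icc lo hi := by
  intro i hi
  rcases hi.lt_or_eq with hi | rfl
  · rw [hinterior i hi]
    exact one_sub_mul_add_mul_mem_Icc hθ₀ hθ₁ (hv i hi.le) (hv (i + 1) hi)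
  · rw [houtlet]
    exact one_sub_mul_add_mul_mem_Icc hρ₀ hρ₁ (hv i le_rfl) hgN

lemma transport_step_abs_le {N : ℕ} {lam V W : ℝ} {v w w' : ℕ → ℝ}
    (hlam : 0 ≤ lam) (hcfl : lam * V ≤ 1)
    (hrec : ∀ i, 1 ≤ i → i ≤ N → w' i = (1 - lam * v i) * w i + lam * v i * w (i - 1))
    (hv : ∀ i ≤ N, v i ∈ Icc 0 V) (hw : ∀ i ≤ N, |w i| ≤ W) (hinlet : |w' 0| ≤ W) :
    ∀ i ≤ N, |w' i| ≤ W := by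
  intro i hi
  rcases Nat.eq_zero_or_pos i with rfl | hi₁
  · exact hinlet
  · rw [hrec i hi₁ hi]
    exact abs_one_sub_mul_add_mul_le (mul_nonneg hlam (hv i hi).1)
      (le_trans (mul_le_mul_of_nonneg_left (hv i hi).2 hlam) hcfl)
      (hw i hi) (hw (i - 1) (by omega))

theorem stmt17_general (N m : ℕ)
    (c μ lam δ vmax : ℝ) (hc : 0 < c) (hμ : 0 ≤ μ) (hlam : 0 < lam) (hδ : 0 < δ)
    (hcfl1 : lam * c ≤ 1) (hcfl2 : μ * δ ≤ 1)
    (g : ℝ → ℝ → ℝ)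
    (hg : ∀ u : ℝ, 0 ≤ u → ∀ z : ℝ, 0 < g 0 z ∧ g 0 z ≤ g u z ∧ g u z ≤ vmax)
    (a : ℕ → ℝ → ℝ) (v w : ℕ → ℕ → ℝ)
    (hrecw : ∀ k < m, ∀ i, 1 ≤ i → i ≤ N →
      w i (k + 1) = (1 - lam * v i k) * w i k + lam * v i k * w (i - 1) k)
    (hrecv : ∀ k < m, ∀ i < N,
      v i (k + 1) = (1 - lam * c) * v i k + lam * c * v (i + 1) k)
    (hrecvN : ∀ k < m, v N (k + 1) = (1 - μ * δ) * v N k + μ * δ * g (v N k) (w N k))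
    (hbcw : ∀ k ≤ m, w 0 k = a k (v 0 k))
    (hv0 : ∀ i ≤ N, 0 ≤ v i 0)
    (Vb : ℝ)
    (hVb : Vb = max
      ((Finset.range (N + 1)).sup'
        (Finset.nonempty_range_iff.mpr (Nat.succ_ne_zero N)) fun i => v i 0) vmax)
    (hcfl3 : lam * Vb ≤ 1)
    (hBdd : BddAbove {y : ℝ | ∃ k ≤ m, ∃ u ∈ Icc (0:ℝ) Vb, y = |a k u|})
    (B W : ℝ)
    (hB : B = sSup {y : ℝ | ∃ k ≤ m, ∃ u ∈ Icc (0:ℝ) Vb, y = |a k u|})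
    (hW : W = max
      ((Finset.range (N + 1)).sup'
        (Finset.nonempty_range_iff.mpr (Nat.succ_ne_zero N)) fun i => |w i 0|) B) :
    ∀ k ≤ m, ∀ i ≤ N,
      (0 ≤ v i k ∧ v i k ≤ Vb) ∧
      |w i k| ≤ W ∧
      min
        ((Finset.range (N + 1)).inf'
          (Finset.nonempty_range_iff.mpr (Nat.succ_ne_zero N)) fun j => v j 0)
        (sInf {y : ℝ | ∃ z : ℝ, |z| ≤ W ∧ y = g 0 z}) ≤ v i k := by
  have hrange {i : ℕ} (hi : i ≤ N) : i ∈ Finset.range (N + 1) := Finset.mem_range.mpr (by omega)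
  have hVb_v0 (i : ℕ) (hi : i ≤ N) : v i 0 ≤ Vb :=
    hVb ▸ le_max_of_le_left (Finset.le_sup' (fun i => v i 0) (hrange hi))
  have hVb_g (u : ℝ) (hu : 0 ≤ u) (z : ℝ) : g u z ≤ Vb :=
    hVb ▸ le_max_of_le_right (hg u hu z).2.2
  have hW_w0 (i : ℕ) (hi : i ≤ N) : |w i 0| ≤ W :=
    hW ▸ le_max_of_le_left (Finset.le_sup' (fun i => |w i 0|) (hrange hi))
  have hW_a (k : ℕ) (hk : k ≤ m) (u : ℝ) (hu : u ∈ Icc 0 Vb) : |a k u| ≤ W :=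
    hW ▸ le_max_of_le_right (hB ▸ le_csSup hBdd ⟨k, hk, u, hu, rfl⟩)
  set M := min ((Finset.range (N + 1)).inf'
    (Finset.nonempty_range_iff.mpr (Nat.succ_ne_zero N)) fun j => v j 0)
      (sInf {y : ℝ | ∃ z : ℝ, |z| ≤ W ∧ y = g 0 z})
  have hM_v0 (i : ℕ) (hi : i ≤ N) : M ≤ v i 0 :=
    (min_le_left _ _).trans (Finset.inf'_le _ (hrange hi))
  have hM_g (z : ℝ) (hz : |z| ≤ W) : M ≤ g 0 z :=
    (min_le_right _ _).trans
      (csInf_le ⟨0, by rintro y ⟨z, -, rfl⟩; exact (hg 0 le_rfl z).1.le⟩ ⟨z, hz, rfl⟩)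
  have hlc₀ : 0 ≤ lam * c := (mul_pos hlam hc).le
  have hμδ₀ : 0 ≤ μ * δ := mul_nonneg hμ hδ.le
  intro k hk
  induction k with
  | zero => exact fun i hi => ⟨⟨hv0 i hi, hVb_v0 i hi⟩, hW_w0 i hi, hM_v0 i hi⟩
  | succ k ih =>
    have hkm : k < m := hk
    have IH := ih hkm.le
    obtain ⟨hvN, hwN, -⟩ := IH N le_rfl
    obtain ⟨hg₀, hg_mono, -⟩ := hg _ hvN.1 (w N k)
    have hv' := velocity_step_mem_Icc hlc₀ hcfl1 hμδ₀ hcfl2 (hrecv k hkm) (hrecvN k hkm)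
      (fun i hi => (IH i hi).1) ⟨hg₀.le.trans hg_mono, hVb_g _ hvN.1 _⟩
    have hvM' := velocity_step_mem_Icc hlc₀ hcfl1 hμδ₀ hcfl2 (hrecv k hkm) (hrecvN k hkm)
      (fun i hi => ⟨(IH i hi).2.2, (IH i hi).1.2⟩)
      ⟨(hM_g _ hwN).trans hg_mono, hVb_g _ hvN.1 _⟩
    have hw' := transport_step_abs_le hlam.le hcfl3 (hrecw k hkm) (fun i hi => (IH i hi).1)
      (fun i hi => (IH i hi).2.1) (hbcw (k + 1) hk ▸ hW_a (k + 1) hk _ (hv' 0 (Nat.zero_le N)))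
    exact fun i hi => ⟨hv' i hi, hw' i hi, (hvM' i hi).1⟩

/-- Invariance properties of the explicit upwind finite-difference discretization of the
coupled hyperbolic system `∂w/∂t + v ∂w/∂x = 0`, `∂v/∂t - c ∂v/∂x = 0` with inlet
condition `w = a(k, v)` at `i = 0` and relaxation-type outlet condition at `i = N`:
under the CFL-type conditions `λ c ≤ 1`, `μ δ ≤ 1`, `λ V̄ ≤ 1`,
(i) `0 ≤ v_i(k) ≤ V̄`, (ii) `|w_i(k)| ≤ W`, and
(iii) `v_i(k) ≥ min (min_j v_j(0)) (inf {g(0,w) : |w| ≤ W})`. -/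
theorem stmt17 (N m : ℕ) (hN : 1 ≤ N) (hm : 1 ≤ m)
    (c μ lam δ vmax : ℝ) (hc : 0 < c) (hμ : 0 ≤ μ) (hlam : 0 < lam) (hδ : 0 < δ)
    (hvmax : 0 < vmax) (hcfl1 : lam * c ≤ 1) (hcfl2 : μ * δ ≤ 1)
    (g : ℝ → ℝ → ℝ)
    (hg : ∀ u : ℝ, 0 ≤ u → ∀ z : ℝ, 0 < g 0 z ∧ g 0 z ≤ g u z ∧ g u z ≤ vmax)
    (a : ℕ → ℝ → ℝ) (v w : ℕ → ℕ → ℝ)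
    (hrecw : ∀ k < m, ∀ i, 1 ≤ i → i ≤ N →
      w i (k + 1) = (1 - lam * v i k) * w i k + lam * v i k * w (i - 1) k)
    (hrecv : ∀ k < m, ∀ i < N,
      v i (k + 1) = (1 - lam * c) * v i k + lam * c * v (i + 1) k)
    (hrecvN : ∀ k < m, v N (k + 1) = (1 - μ * δ) * v N k + μ * δ * g (v N k) (w N k))
    (hbcw : ∀ k ≤ m, w 0 k = a k (v 0 k))
    (hv0 : ∀ i ≤ N, 0 ≤ v i 0)
    (Vb : ℝ)
    (hVb : Vb = max
      ((Finset.range (N + 1)).sup'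
        (Finset.nonempty_range_iff.mpr (Nat.succ_ne_zero N)) fun i => v i 0) vmax)
    (hcfl3 : lam * Vb ≤ 1)
    (hBdd : BddAbove {y : ℝ | ∃ k ≤ m, ∃ u ∈ Icc (0:ℝ) Vb, y = |a k u|})
    (B W : ℝ)
    (hB : B = sSup {y : ℝ | ∃ k ≤ m, ∃ u ∈ Icc (0:ℝ) Vb, y = |a k u|})
    (hW : W = max
      ((Finset.range (N + 1)).sup'
        (Finset.nonempty_range_iff.mpr (Nat.succ_ne_zero N)) fun i => |w i 0|) B) :
    ∀ k ≤ m, ∀ i ≤ N,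
      (0 ≤ v i k ∧ v i k ≤ Vb) ∧
      |w i k| ≤ W ∧
      min
        ((Finset.range (N + 1)).inf'
          (Finset.nonempty_range_iff.mpr (Nat.succ_ne_zero N)) fun j => v j 0)
        (sInf {y : ℝ | ∃ z : ℝ, |z| ≤ W ∧ y = g 0 z}) ≤ v i k :=
  stmt17_general N m c μ lam δ vmax hc hμ hlam hδ hcfl1 hcfl2 g hg a v w hrecw hrecv hrecvN hbcw hv0
    Vb hVb hcfl3 hBdd B W hB hW
end

section
/- Let N ≥ 2 and m ≥ 1 be integers, let c > 0, μ ≥ 0, λ > 0 and K ≥ 0 be constants with λ·c ≤ 1, and let real numbers p_i(k) for i = 0,…,N−1, k = 0,…,m satisfy p_i(k+1) = (1 − λc)·p_i(k) + λc·p_{i+1}(k) for i = 0,…,N−2 and |p_{N−1}(k+1)| ≤ (1 − λc)·|p_{N−1}(k)| + μ·λ·K, for all k = 0,…,m−1. Then max_{i=0,…,N−1} |p_i(k)| ≤ max_{i=0,…,N−1} |p_i(0)| + c⁻¹·μ·K for all k = 0,…,m. -/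
/-! With `θ = λc` the outlet contribution is `μλK = θ · c⁻¹μK`, so every new value is bounded by a
convex combination (weights `1 - θ`, `θ`) of old values and of `c⁻¹μK`. Hence the bound
`max_i |p_i(0)| + c⁻¹μK`, which dominates all of these, propagates from one time level to the
next. -/

lemma convex_comb_le {θ u v B : ℝ} (hθ₀ : 0 ≤ θ) (hθ₁ : θ ≤ 1) (hu : u ≤ B) (hv : v ≤ B) :
    (1 - θ) * u + θ * v ≤ B := by
  nlinarith

lemma abs_convex_comb_le {θ a b B : ℝ} (hθ₀ : 0 ≤ θ) (hθ₁ : θ ≤ 1) (ha : |a| ≤ B)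
    (hb : |b| ≤ B) : |(1 - θ) * a + θ * b| ≤ B :=
  calc |(1 - θ) * a + θ * b|
      ≤ |(1 - θ) * a| + |θ * b| := abs_add_le _ _
    _ = (1 - θ) * |a| + θ * |b| := by
      rw [abs_mul, abs_mul, abs_of_nonneg (sub_nonneg.mpr hθ₁), abs_of_nonneg hθ₀]
    _ ≤ B := convex_comb_le hθ₀ hθ₁ ha hb

lemma abs_le_of_upwind_step {N : ℕ} {θ E B : ℝ} {u v : ℕ → ℝ} (hθ₀ : 0 ≤ θ) (hθ₁ : θ ≤ 1)
    (hEB : E ≤ B) (hint : ∀ i, i + 2 ≤ N → v i = (1 - θ) * u i + θ * u (i + 1))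
    (hout : |v (N - 1)| ≤ (1 - θ) * |u (N - 1)| + θ * E) (hu : ∀ i < N, |u i| ≤ B) :
    ∀ i < N, |v i| ≤ B := by
  intro i hi
  by_cases hiN : i + 2 ≤ N
  · rw [hint i hiN]
    exact abs_convex_comb_le hθ₀ hθ₁ (hu i hi) (hu (i + 1) (by omega))
  · obtain rfl : i = N - 1 := by omega
    exact hout.trans (convex_comb_le hθ₀ hθ₁ (hu _ hi) hEB)

/-- Uniform bound for the divided differences of the finite-difference scheme for the
backward transport equation `∂v/∂t - c ∂v/∂x = 0` with a relaxation-type outlet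
boundary contribution bounded by `μ λ K`. -/
theorem stmt18 (N m : ℕ) (hN : 2 ≤ N) (c μ lam K : ℝ)
    (hc : 0 < c) (hμ : 0 ≤ μ) (hlam : 0 < lam) (hK : 0 ≤ K) (hcfl : lam * c ≤ 1)
    (p : ℕ → ℕ → ℝ)
    (hrec : ∀ k < m, ∀ i, i + 2 ≤ N →
      p i (k + 1) = (1 - lam * c) * p i k + lam * c * p (i + 1) k)
    (hbnd : ∀ k < m, |p (N - 1) (k + 1)| ≤ (1 - lam * c) * |p (N - 1) k| + μ * lam * K) :
    ∀ k ≤ m, ∀ i < N, |p i k| ≤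
      ((Finset.range N).sup' (Finset.nonempty_range_iff.mpr (by omega)) fun j => |p j 0|)
        + c⁻¹ * μ * K := by
  set M := (Finset.range N).sup' (Finset.nonempty_range_iff.mpr (by omega)) fun j => |p j 0|
  have hinit : ∀ i < N, |p i 0| ≤ M := fun i hi =>
    Finset.le_sup' (fun j => |p j 0|) (Finset.mem_range.mpr hi)
  have hM : 0 ≤ M := (abs_nonneg _).trans (hinit 0 (by omega))
  have hsource : μ * lam * K = lam * c * (c⁻¹ * μ * K) := by
    field_simp
  intro k
  induction k with
  | zero =>
    have hE : 0 ≤ c⁻¹ * μ * K := by positivity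
    exact fun _ i hi => (hinit i hi).trans (le_add_of_nonneg_right hE)
  | succ k ih =>
    intro hk
    refine abs_le_of_upwind_step (mul_pos hlam hc).le hcfl (le_add_of_nonneg_left hM)
      (hrec k (by omega)) ?_ (ih (by omega))
    simpa only [hsource] using hbnd k (by omega)
end
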